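/- arXiv:2605.23661 — 4 statements merged into one kernel-verified Lean document; each statement's English description precedes it below -/
import Mathlib

section
/- Let r, s be positive integers, θ, θ̂ ∈ ℝ^r, W ∈ ℝ^{s×r}, η ∈ ℝ^s, and κ ∈ (0,2). Define ν := 1 + tr(Wᵀ W), Y := W θ + η, e := (Y − W θ̂)/ν, and θ̄ := θ̂ + κ Wᵀ e. Then ‖θ − θ̄‖² ≤ ‖θ − θ̂‖² − κ(2−κ) ν ‖e‖² + 2κ ⟨η, e⟩, where ‖·‖ is the Euclidean norm and ⟨·,·⟩ the Euclidean inner product. -/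
/-!
With `d = θ - θ̂` and `W d = ν e - η`, the update gives
`‖θ - θ̄‖² = ‖d‖² - 2κ ⟪W d, e⟫ + κ² ‖Wᵀ e‖²`, where `⟪W d, e⟫ = ν ‖e‖² - ⟪η, e⟫`.
The last term is controlled by Cauchy–Schwarz row by row:
`‖Wᵀ e‖² ≤ tr(WᵀW) ‖e‖² ≤ ν ‖e‖²`.
-/

open Matrix

section

variable {E F : Type*} [NormedAddCommGroup E] [InnerProductSpace ℝ E] [FiniteDimensional ℝ E]
  [NormedAddCommGroup F] [InnerProductSpace ℝ F] [FiniteDimensional ℝ F]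

theorem norm_sub_add_smul_adjoint_sq_le (T : E →ₗ[ℝ] F) (θ θhat : E) (η e : F) (ν κ : ℝ)
    (hTe : ‖T.adjoint e‖ ^ 2 ≤ ν * ‖e‖ ^ 2) (he : ν • e = T (θ - θhat) + η) :
    ‖θ - (θhat + κ • T.adjoint e)‖ ^ 2
      ≤ ‖θ - θhat‖ ^ 2 - κ * (2 - κ) * ν * ‖e‖ ^ 2 + 2 * κ * inner ℝ η e := by
  have hinner : inner ℝ (θ - θhat) (T.adjoint e) = ν * ‖e‖ ^ 2 - inner ℝ η e := by
    rw [LinearMap.adjoint_inner_right, eq_sub_of_add_eq he.symm, inner_sub_left,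
      real_inner_smul_left, real_inner_self_eq_norm_sq]
  have hexpand : ‖θ - (θhat + κ • T.adjoint e)‖ ^ 2
      = ‖θ - θhat‖ ^ 2 - 2 * κ * inner ℝ (θ - θhat) (T.adjoint e)
        + κ ^ 2 * ‖T.adjoint e‖ ^ 2 := by
    rw [← sub_sub, norm_sub_sq_real, real_inner_smul_right, norm_smul, mul_pow,
      Real.norm_eq_abs, sq_abs]
    ring
  rw [hexpand, hinner]
  nlinarith [mul_le_mul_of_nonneg_left hTe (sq_nonneg κ)]

end

variable {m n : Type*} [Fintype m] [Fintype n]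

theorem trace_mul_transpose_self_eq_sum_sq (A : Matrix m n ℝ) :
    (A * Aᵀ).trace = ∑ i, ∑ j, A i j ^ 2 := by
  simp only [trace, diag, mul_apply, transpose_apply, sq]

theorem trace_transpose_mul_self_nonneg (A : Matrix m n ℝ) : 0 ≤ (Aᵀ * A).trace := by
  simpa using trace_mul_transpose_self_eq_sum_sq Aᵀ ▸ by positivity

theorem norm_toEuclideanLin_sq_le [DecidableEq n] (A : Matrix m n ℝ) (x : EuclideanSpace ℝ n) :
    ‖toEuclideanLin A x‖ ^ 2 ≤ (A * Aᵀ).trace * ‖x‖ ^ 2 := by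
  simp only [EuclideanSpace.norm_sq_eq, toLpLin_apply, trace_mul_transpose_self_eq_sum_sq,
    Real.norm_eq_abs, sq_abs]
  rw [Finset.sum_mul]
  refine Finset.sum_le_sum fun i _ => ?_
  simpa [mulVec, dotProduct] using Finset.sum_mul_sq_le_sq_mul_sq Finset.univ (A i) x

theorem toEuclideanLin_transpose_eq_adjoint [DecidableEq m] [DecidableEq n] (A : Matrix m n ℝ) :
    toEuclideanLin Aᵀ = (toEuclideanLin A).adjoint := by
  rw [← toEuclideanLin_conjTranspose_eq_adjoint, conjTranspose_eq_transpose_of_trivial]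

open Matrix in
theorem stmt6_general (r s : ℕ)
    (θ θhat : EuclideanSpace ℝ (Fin r)) (W : Matrix (Fin s) (Fin r) ℝ)
    (η : EuclideanSpace ℝ (Fin s)) (κ : ℝ)
    (ν : ℝ) (hν : ν = 1 + Matrix.trace (Wᵀ * W))
    (Y : EuclideanSpace ℝ (Fin s)) (hY : Y = Matrix.toEuclideanLin W θ + η)
    (e : EuclideanSpace ℝ (Fin s))
    (he : e = ν⁻¹ • (Y - Matrix.toEuclideanLin W θhat))
    (θbar : EuclideanSpace ℝ (Fin r))
    (hθbar : θbar = θhat + κ • Matrix.toEuclideanLin Wᵀ e) :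
    ‖θ - θbar‖ ^ 2 ≤ ‖θ - θhat‖ ^ 2 - κ * (2 - κ) * ν * ‖e‖ ^ 2
      + 2 * κ * (inner ℝ η e : ℝ) := by
  have htrace := trace_transpose_mul_self_nonneg W
  have hbound : ‖toEuclideanLin Wᵀ e‖ ^ 2 ≤ ν * ‖e‖ ^ 2 :=
    calc ‖toEuclideanLin Wᵀ e‖ ^ 2 ≤ (Wᵀ * W).trace * ‖e‖ ^ 2 := by
          simpa using norm_toEuclideanLin_sq_le Wᵀ e
      _ ≤ ν * ‖e‖ ^ 2 := by gcongr; linarith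
  have hνe : ν • e = toEuclideanLin W (θ - θhat) + η := by
    rw [he, smul_inv_smul₀ (by linarith), hY, map_sub]
    abel
  rw [toEuclideanLin_transpose_eq_adjoint] at hθbar hbound
  exact hθbar ▸ norm_sub_add_smul_adjoint_sq_le _ θ θhat η e ν κ hbound hνe

open Matrix in
/-- One-step contraction inequality for the normalized gradient-descent update
`θ̄ = θ̂ + κ Wᵀ e` with `e = (Y - W θ̂)/ν`, `ν = 1 + tr(WᵀW)`, `Y = W θ + η`:
`‖θ - θ̄‖² ≤ ‖θ - θ̂‖² - κ(2-κ) ν ‖e‖² + 2κ ⟨η, e⟩`. -/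
theorem stmt6 (r s : ℕ) (hr : 0 < r) (hs : 0 < s)
    (θ θhat : EuclideanSpace ℝ (Fin r)) (W : Matrix (Fin s) (Fin r) ℝ)
    (η : EuclideanSpace ℝ (Fin s)) (κ : ℝ) (hκ : κ ∈ Set.Ioo (0 : ℝ) 2)
    (ν : ℝ) (hν : ν = 1 + Matrix.trace (Wᵀ * W))
    (Y : EuclideanSpace ℝ (Fin s)) (hY : Y = Matrix.toEuclideanLin W θ + η)
    (e : EuclideanSpace ℝ (Fin s))
    (he : e = ν⁻¹ • (Y - Matrix.toEuclideanLin W θhat))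
    (θbar : EuclideanSpace ℝ (Fin r))
    (hθbar : θbar = θhat + κ • Matrix.toEuclideanLin Wᵀ e) :
    ‖θ - θbar‖ ^ 2 ≤ ‖θ - θhat‖ ^ 2 - κ * (2 - κ) * ν * ‖e‖ ^ 2
      + 2 * κ * (inner ℝ η e : ℝ) :=
  stmt6_general r s θ θhat W η κ ν hν Y hY e he θbar hθbar
end

section
/- Let r, s be positive integers, θ ∈ ℝ^r, κ ∈ (0,2), δ ∈ (0, 2−κ), and η̄ ≥ 0. Let (W_t)_{t≥1} ⊆ ℝ^{s×r} and (η_t)_{t≥1} ⊆ ℝ^s satisfy ‖η_t‖² ≤ η̄² ν_t where ν_t := 1 + tr(W_tᵀ W_t), and let Y_t := W_t θ + η_t. Let (θ̂_t)_{t≥0} be any sequence such that, with e_t := (Y_t − W_t θ̂_{t−1})/ν_t and θ̄_t := θ̂_{t−1} + κ W_tᵀ e_t, it holds that ‖θ − θ̂_t‖ ≤ ‖θ − θ̄_t‖ for all t ≥ 1. Then for every T ≥ 1: κ(2−κ−δ) Σ_{t=1}^{T} ν_t ‖e_t‖² ≤ ‖θ − θ̂_0‖² + T κ η̄²/δ.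 -/
/-! The projection does not increase the distance to `θ`, so it suffices to control
`‖θ - θ̄_t‖²`. Expanding `θ̄_t = θ̂_{t-1} + κ W_tᵀ e_t`, the residual identity
`W_t (θ - θ̂_{t-1}) = ν_t e_t - η_t` turns the cross term into `ν_t ‖e_t‖² - ⟪η_t, e_t⟫`,
Cauchy–Schwarz gives `‖W_tᵀ e_t‖² ≤ tr(W_tᵀ W_t) ‖e_t‖² ≤ ν_t ‖e_t‖²`, and Young's inequality
absorbs the noise term at the price `δ ν_t ‖e_t‖² + η̄² / δ`. Hence `‖θ - θ̂_t‖²` drops by at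
least `κ (2 - κ - δ) ν_t ‖e_t‖² - κ η̄² / δ` per step, and the bound telescopes. -/

open Matrix
open scoped InnerProductSpace

namespace Matrix

variable {m n : Type*} [Fintype m] [Fintype n]

lemma trace_transpose_mul_self_eq_sum_sq (M : Matrix m n ℝ) :
    trace (Mᵀ * M) = ∑ j, ∑ i, M i j ^ 2 := by
  simp [trace, mul_apply, sq]

lemma trace_transpose_mul_self_nonneg (M : Matrix m n ℝ) : 0 ≤ trace (Mᵀ * M) := by
  rw [trace_transpose_mul_self_eq_sum_sq]
  positivity

lemma inner_toEuclideanLin_transpose [DecidableEq m] [DecidableEq n] (M : Matrix m n ℝ)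
    (x : EuclideanSpace ℝ n) (y : EuclideanSpace ℝ m) :
    ⟪x, toEuclideanLin Mᵀ y⟫_ℝ = ⟪toEuclideanLin M x, y⟫_ℝ := by
  rw [← conjTranspose_eq_transpose_of_trivial, toEuclideanLin_conjTranspose_eq_adjoint,
    LinearMap.adjoint_inner_right]

lemma norm_toEuclideanLin_transpose_sq_le [DecidableEq m] [DecidableEq n] (M : Matrix m n ℝ)
    (y : EuclideanSpace ℝ m) :
    ‖toEuclideanLin Mᵀ y‖ ^ 2 ≤ trace (Mᵀ * M) * ‖y‖ ^ 2 := by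
  rw [EuclideanSpace.real_norm_sq_eq, EuclideanSpace.real_norm_sq_eq,
    trace_transpose_mul_self_eq_sum_sq, Finset.sum_mul]
  refine Finset.sum_le_sum fun j _ => ?_
  have hcoord : toEuclideanLin Mᵀ y j = ∑ i, M i j * y i := rfl
  rw [hcoord]
  exact Finset.sum_mul_sq_le_sq_mul_sq _ _ _

end Matrix

section Descent

variable {E F : Type*} [NormedAddCommGroup E] [InnerProductSpace ℝ E]
  [NormedAddCommGroup F] [InnerProductSpace ℝ F]

lemma two_inner_le_of_norm_sq_le {η e : F} {δ ν c : ℝ} (hδ : 0 < δ) (hν : 0 < ν)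
    (hη : ‖η‖ ^ 2 ≤ c * ν) :
    2 * ⟪η, e⟫_ℝ ≤ δ * (ν * ‖e‖ ^ 2) + c / δ := by
  have hyoung : 2 * (‖η‖ * ‖e‖) ≤ δ * (ν * ‖e‖ ^ 2) + ‖η‖ ^ 2 / (δ * ν) := by
    rw [← sub_le_iff_le_add', le_div_iff₀ (by positivity)]
    nlinarith [sq_nonneg (δ * ν * ‖e‖ - ‖η‖)]
  have hnoise : ‖η‖ ^ 2 / (δ * ν) ≤ c / δ := by
    rw [div_le_div_iff₀ (by positivity) hδ]
    nlinarith
  linarith [real_inner_le_norm η e]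

lemma mul_le_norm_sq_sub_norm_sub_smul_sq {x g : E} {η e : F} {κ δ ν c : ℝ}
    (hκ : 0 < κ) (hδ : 0 < δ) (hν : 0 < ν)
    (hxg : ⟪x, g⟫_ℝ = ν * ‖e‖ ^ 2 - ⟪η, e⟫_ℝ) (hg : ‖g‖ ^ 2 ≤ ν * ‖e‖ ^ 2)
    (hη : ‖η‖ ^ 2 ≤ c * ν) :
    κ * (2 - κ - δ) * (ν * ‖e‖ ^ 2) ≤ ‖x‖ ^ 2 - ‖x - κ • g‖ ^ 2 + κ * c / δ := by
  have hexpand : ‖x - κ • g‖ ^ 2 = ‖x‖ ^ 2 - 2 * κ * ⟪x, g⟫_ℝ + κ ^ 2 * ‖g‖ ^ 2 := by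
    rw [norm_sub_sq_real, real_inner_smul_right, norm_smul, Real.norm_of_nonneg hκ.le]
    ring
  have hcross := mul_le_mul_of_nonneg_left (two_inner_le_of_norm_sq_le (e := e) hδ hν hη) hκ.le
  have hgrad := mul_le_mul_of_nonneg_left hg (sq_nonneg κ)
  rw [hexpand, hxg, mul_div_assoc]
  nlinarith

end Descent

lemma normalized_gradient_step_le {m n : Type*} [Fintype m] [Fintype n] [DecidableEq m]
    [DecidableEq n] (W : Matrix m n ℝ) (θ θ' : EuclideanSpace ℝ n) (η e : EuclideanSpace ℝ m)
    {κ δ ν c : ℝ} (hκ : 0 < κ) (hδ : 0 < δ) (hν : ν = 1 + trace (Wᵀ * W))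
    (he : e = ν⁻¹ • (toEuclideanLin W θ + η - toEuclideanLin W θ')) (hη : ‖η‖ ^ 2 ≤ c * ν) :
    κ * (2 - κ - δ) * (ν * ‖e‖ ^ 2) ≤
      ‖θ - θ'‖ ^ 2 - ‖θ - (θ' + κ • toEuclideanLin Wᵀ e)‖ ^ 2 + κ * c / δ := by
  have htrace := W.trace_transpose_mul_self_nonneg
  have hν0 : 0 < ν := by linarith
  have hresidual : toEuclideanLin W (θ - θ') = ν • e - η := by
    rw [he, smul_inv_smul₀ hν0.ne', map_sub]
    abel
  have hgrad : ‖toEuclideanLin Wᵀ e‖ ^ 2 ≤ ν * ‖e‖ ^ 2 :=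
    (W.norm_toEuclideanLin_transpose_sq_le e).trans (by gcongr; linarith)
  rw [sub_add_eq_sub_sub]
  refine mul_le_norm_sq_sub_norm_sub_smul_sq hκ hδ hν0 ?_ hgrad hη
  rw [inner_toEuclideanLin_transpose, hresidual, inner_sub_left, real_inner_smul_left,
    real_inner_self_eq_norm_sq]

lemma sum_Icc_le_of_le_sub_add {a V : ℕ → ℝ} {b : ℝ} (h : ∀ t, a (t + 1) ≤ V t - V (t + 1) + b)
    (T : ℕ) : ∑ t ∈ Finset.Icc 1 T, a t ≤ V 0 - V T + T * b := by
  induction T with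
  | zero => simp
  | succ T ih =>
    rw [Finset.sum_Icc_succ_top (Nat.le_add_left 1 T)]
    push_cast
    linarith [h T]

open Matrix in
theorem stmt7_general (r s : ℕ)
    (θ : EuclideanSpace ℝ (Fin r)) (κ δ ηbar : ℝ)
    (hκ : κ ∈ Set.Ioo (0 : ℝ) 2) (hδ : δ ∈ Set.Ioo (0 : ℝ) (2 - κ))
    (W : ℕ → Matrix (Fin s) (Fin r) ℝ) (η : ℕ → EuclideanSpace ℝ (Fin s))
    (ν : ℕ → ℝ) (hν : ∀ t, ν t = 1 + Matrix.trace ((W t)ᵀ * W t))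
    (hηb : ∀ t, 1 ≤ t → ‖η t‖ ^ 2 ≤ ηbar ^ 2 * ν t)
    (Y : ℕ → EuclideanSpace ℝ (Fin s))
    (hY : ∀ t, Y t = Matrix.toEuclideanLin (W t) θ + η t)
    (θhat : ℕ → EuclideanSpace ℝ (Fin r))
    (e : ℕ → EuclideanSpace ℝ (Fin s))
    (he : ∀ t, e (t + 1) =
      (ν (t + 1))⁻¹ • (Y (t + 1) - Matrix.toEuclideanLin (W (t + 1)) (θhat t)))
    (θbar : ℕ → EuclideanSpace ℝ (Fin r))
    (hθbar : ∀ t, θbar (t + 1) =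
      θhat t + κ • Matrix.toEuclideanLin (W (t + 1))ᵀ (e (t + 1)))
    (hproj : ∀ t, ‖θ - θhat (t + 1)‖ ≤ ‖θ - θbar (t + 1)‖) :
    ∀ T, 1 ≤ T →
      κ * (2 - κ - δ) * ∑ t ∈ Finset.Icc 1 T, ν t * ‖e t‖ ^ 2 ≤
        ‖θ - θhat 0‖ ^ 2 + T * κ * ηbar ^ 2 / δ := by
  intro T _
  have hstep (t : ℕ) : κ * (2 - κ - δ) * (ν (t + 1) * ‖e (t + 1)‖ ^ 2) ≤
      ‖θ - θhat t‖ ^ 2 - ‖θ - θhat (t + 1)‖ ^ 2 + κ * ηbar ^ 2 / δ := by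
    have hdescent := normalized_gradient_step_le (W (t + 1)) θ (θhat t) (η (t + 1)) (e (t + 1))
      hκ.1 hδ.1 (hν (t + 1)) (by rw [he, hY]) (hηb (t + 1) t.succ_pos)
    rw [← hθbar] at hdescent
    have hprojection := pow_le_pow_left₀ (norm_nonneg _) (hproj t) 2
    linarith
  have htelescope := sum_Icc_le_of_le_sub_add
    (a := fun t => κ * (2 - κ - δ) * (ν t * ‖e t‖ ^ 2)) (V := fun t => ‖θ - θhat t‖ ^ 2) hstep T
  rw [← Finset.mul_sum] at htelescope
  have hT : (T : ℝ) * (κ * ηbar ^ 2 / δ) = T * κ * ηbar ^ 2 / δ := by ring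
  linarith [sq_nonneg ‖θ - θhat T‖]

open Matrix in
/-- Accumulated error bound for the projected normalized gradient-descent scheme:
`κ(2-κ-δ) ∑_{t=1}^{T} ν_t ‖e_t‖² ≤ ‖θ - θ̂₀‖² + T κ η̄²/δ`, where
`ν_t = 1 + tr(W_tᵀ W_t)`, `Y_t = W_t θ + η_t` with `‖η_t‖² ≤ η̄² ν_t`,
`e_t = (Y_t - W_t θ̂_{t-1})/ν_t`, `θ̄_t = θ̂_{t-1} + κ W_tᵀ e_t`, and the
(projection) estimates satisfy `‖θ - θ̂_t‖ ≤ ‖θ - θ̄_t‖`. -/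
theorem stmt7 (r s : ℕ) (hr : 0 < r) (hs : 0 < s)
    (θ : EuclideanSpace ℝ (Fin r)) (κ δ ηbar : ℝ)
    (hκ : κ ∈ Set.Ioo (0 : ℝ) 2) (hδ : δ ∈ Set.Ioo (0 : ℝ) (2 - κ)) (hηbar : 0 ≤ ηbar)
    (W : ℕ → Matrix (Fin s) (Fin r) ℝ) (η : ℕ → EuclideanSpace ℝ (Fin s))
    (ν : ℕ → ℝ) (hν : ∀ t, ν t = 1 + Matrix.trace ((W t)ᵀ * W t))
    (hηb : ∀ t, 1 ≤ t → ‖η t‖ ^ 2 ≤ ηbar ^ 2 * ν t)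
    (Y : ℕ → EuclideanSpace ℝ (Fin s))
    (hY : ∀ t, Y t = Matrix.toEuclideanLin (W t) θ + η t)
    (θhat : ℕ → EuclideanSpace ℝ (Fin r))
    (e : ℕ → EuclideanSpace ℝ (Fin s))
    (he : ∀ t, e (t + 1) =
      (ν (t + 1))⁻¹ • (Y (t + 1) - Matrix.toEuclideanLin (W (t + 1)) (θhat t)))
    (θbar : ℕ → EuclideanSpace ℝ (Fin r))
    (hθbar : ∀ t, θbar (t + 1) =
      θhat t + κ • Matrix.toEuclideanLin (W (t + 1))ᵀ (e (t + 1)))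
    (hproj : ∀ t, ‖θ - θhat (t + 1)‖ ≤ ‖θ - θbar (t + 1)‖) :
    ∀ T, 1 ≤ T →
      κ * (2 - κ - δ) * ∑ t ∈ Finset.Icc 1 T, ν t * ‖e t‖ ^ 2 ≤
        ‖θ - θhat 0‖ ^ 2 + T * κ * ηbar ^ 2 / δ :=
  stmt7_general r s θ κ δ ηbar hκ hδ W η ν hν hηb Y hY θhat e he θbar hθbar hproj
end

section
/- Let n, m, q be positive integers with q ≤ n. Let A = [𝒜 | (I_{n−q}; 0_{q×(n−q)})] and F = [ℱ | (I_{n−q}; 0_{q×(n−q)})] with 𝒜, ℱ ∈ ℝ^{n×q}, let B ∈ ℝ^{n×m}, C = [I_q, 0_{q×(n−q)}] ∈ ℝ^{q×n}, and let (u_k), (d_k) be sequences. Suppose x_{k+1} = A x_k + B u_k + d_k and y_k = C x_k, and M_{k+1} = F M_k + [I_n⊗y_kᵀ, I_n⊗u_kᵀ] with M₀ = 0. Fix estimates 𝒜̂ ∈ ℝ^{n×q}, B̂ ∈ ℝ^{n×m}, x̂₀ ∈ ℝ^n; set Â := [𝒜̂ | (I_{n−q}; 0_{q×(n−q)})] and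 p̂ := (vec(𝒜̂) − vec(ℱ); vec(B̂)). Fix t ≥ 0 and define x̂_{t,i} := M_{t+i} p̂ + F^{t+i} x̂₀ and x̃_{t,i} := x_{t+i} − x̂_{t,i}. Then for all i ≥ 0: x̂_{t,i+1} = Â x̂_{t,i} + B̂ u_{t+i} + (Â − F) x̃_{t,i}. -/
lemma sum_fin_restrict {n q : ℕ} (hqn : q ≤ n) (g : Fin n → ℝ)
    (hg : ∀ l : Fin n, q ≤ (l : ℕ) → g l = 0) :
    ∑ l, g l = ∑ j : Fin q, g (Fin.castLE hqn j) := by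
  have himg := Finset.sum_image (f := g) (s := (Finset.univ : Finset (Fin q)))
    (g := fun j : Fin q => Fin.castLE hqn j)
    (fun a _ b _ h => Fin.castLE_injective hqn h)
  rw [← himg]
  refine (Finset.sum_subset (Finset.subset_univ _) ?_).symm
  intro l _ hl
  refine hg l (le_of_not_gt fun hlt => hl ?_)
  simp only [Finset.mem_image, Finset.mem_univ, true_and]
  exact ⟨⟨l, hlt⟩, rfl⟩

/-- Prediction-model identity: the observer state predicted with fixed point
estimates satisfies `x̂_{t,i+1} = Â x̂_{t,i} + B̂ u_{t+i} + (Â - F) x̃_{t,i}`.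
Matrices in observable canonical form `A = [𝒜 | (I_{n-q}; 0)]` are encoded entrywise:
`A i j = 𝒜 i j` for `j < q` and `A i j = δ_{i, j-q}` for `j ≥ q`.  The regressor
`[I_n ⊗ yᵀ, I_n ⊗ uᵀ]` has columns indexed by `(Fin n × Fin q) ⊕ (Fin n × Fin m)`,
and `p̂ = (vec(𝒜̂) - vec(ℱ); vec(B̂))` (row-stacked vectorizations). -/
theorem stmt10 (n m q : ℕ) (hn : 0 < n) (hm : 0 < m) (hq0 : 0 < q) (hqn : q ≤ n)
    (Acal Fcal : Matrix (Fin n) (Fin q) ℝ) (B : Matrix (Fin n) (Fin m) ℝ)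
    (A F : Matrix (Fin n) (Fin n) ℝ)
    (hA : ∀ i j, A i j = if h : (j : ℕ) < q then Acal i ⟨(j : ℕ), h⟩
      else if (i : ℕ) = (j : ℕ) - q then 1 else 0)
    (hF : ∀ i j, F i j = if h : (j : ℕ) < q then Fcal i ⟨(j : ℕ), h⟩
      else if (i : ℕ) = (j : ℕ) - q then 1 else 0)
    (C : Matrix (Fin q) (Fin n) ℝ)
    (hC : ∀ i j, C i j = if (i : ℕ) = (j : ℕ) then 1 else 0)
    (u : ℕ → Fin m → ℝ) (d : ℕ → Fin n → ℝ)
    (x : ℕ → Fin n → ℝ) (y : ℕ → Fin q → ℝ)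
    (hx : ∀ k, x (k + 1) = A.mulVec (x k) + B.mulVec (u k) + d k)
    (hy : ∀ k, y k = C.mulVec (x k))
    (Reg : ℕ → Matrix (Fin n) ((Fin n × Fin q) ⊕ (Fin n × Fin m)) ℝ)
    (hReg : ∀ k i c, Reg k i c = Sum.elim
      (fun ij : Fin n × Fin q => if i = ij.1 then y k ij.2 else 0)
      (fun ij : Fin n × Fin m => if i = ij.1 then u k ij.2 else 0) c)
    (M : ℕ → Matrix (Fin n) ((Fin n × Fin q) ⊕ (Fin n × Fin m)) ℝ)
    (hM0 : M 0 = 0) (hM : ∀ k, M (k + 1) = F * M k + Reg k)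
    (Ahatcal : Matrix (Fin n) (Fin q) ℝ) (Bhat : Matrix (Fin n) (Fin m) ℝ)
    (xhat0 : Fin n → ℝ)
    (Ahat : Matrix (Fin n) (Fin n) ℝ)
    (hAhat : ∀ i j, Ahat i j = if h : (j : ℕ) < q then Ahatcal i ⟨(j : ℕ), h⟩
      else if (i : ℕ) = (j : ℕ) - q then 1 else 0)
    (phat : ((Fin n × Fin q) ⊕ (Fin n × Fin m)) → ℝ)
    (hphat : phat = Sum.elim
      (fun ij : Fin n × Fin q => Ahatcal ij.1 ij.2 - Fcal ij.1 ij.2)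
      (fun ij : Fin n × Fin m => Bhat ij.1 ij.2))
    (t : ℕ)
    (xhat xtil : ℕ → Fin n → ℝ)
    (hxhat : ∀ i, xhat i = (M (t + i)).mulVec phat + (F ^ (t + i)).mulVec xhat0)
    (hxtil : ∀ i, xtil i = x (t + i) - xhat i) :
    ∀ i, xhat (i + 1) = Ahat.mulVec (xhat i) + Bhat.mulVec (u (t + i))
      + (Ahat - F).mulVec (xtil i) := by
  intro i
  set k := t + i with hk
  -- y in terms of x
  have hyx : ∀ k' (j : Fin q), y k' j = x k' (Fin.castLE hqn j) := by
    intro k' j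
    rw [hy k']
    simp only [Matrix.mulVec, dotProduct, hC]
    have hite : ∀ l : Fin n, (if (j : ℕ) = (l : ℕ) then (1 : ℝ) else 0) * x k' l
        = if Fin.castLE hqn j = l then x k' l else 0 := by
      intro l
      by_cases h : (j : ℕ) = (l : ℕ)
      · rw [if_pos h, if_pos (show Fin.castLE hqn j = l from Fin.ext h), one_mul]
      · rw [if_neg h, if_neg (fun hc => h (by simpa using congrArg Fin.val hc)), zero_mul]
    simp_rw [hite]
    simp
  -- key: regressor times phat
  have hreg : (Reg k).mulVec phat = (Ahat - F).mulVec (x k) + Bhat.mulVec (u k) := by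
    funext r
    have hlhs : (Reg k).mulVec phat r
        = ∑ j : Fin q, y k j * (Ahatcal r j - Fcal r j)
          + ∑ j : Fin m, u k j * Bhat r j := by
      simp only [Matrix.mulVec, dotProduct, hReg, hphat, Fintype.sum_sum_type,
        Fintype.sum_prod_type, Sum.elim_inl, Sum.elim_inr, ite_mul, zero_mul]
      simp [Finset.sum_ite_eq]
    have hrhs : ((Ahat - F).mulVec (x k)) r
        = ∑ j : Fin q, (Ahatcal r j - Fcal r j) * x k (Fin.castLE hqn j) := by
      show ∑ l : Fin n, (Ahat r l - F r l) * x k l = _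
      rw [sum_fin_restrict hqn _ (fun l hl => by
        rw [hAhat, hF, dif_neg (not_lt.2 hl), dif_neg (not_lt.2 hl), sub_self, zero_mul])]
      refine Finset.sum_congr rfl fun j _ => ?_
      have hjq : ((Fin.castLE hqn j : Fin n) : ℕ) < q := j.isLt
      rw [hAhat, hF, dif_pos hjq, dif_pos hjq]
      congr 2 <;> exact Fin.ext rfl
    rw [Pi.add_apply, hlhs, hrhs]
    congr 1
    · refine Finset.sum_congr rfl fun j _ => ?_
      rw [hyx k j, mul_comm]
    · simp only [Matrix.mulVec, dotProduct]
      exact Finset.sum_congr rfl fun j _ => mul_comm _ _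
  -- main computation
  have h1 : xhat (i + 1) = F.mulVec (xhat i) + (Reg k).mulVec phat := by
    rw [hxhat (i + 1), hxhat i, show t + (i + 1) = k + 1 from rfl, hM k,
      pow_succ' F k, Matrix.add_mulVec, ← Matrix.mulVec_mulVec, ← Matrix.mulVec_mulVec,
      Matrix.mulVec_add]
    abel
  rw [h1, hreg, hxtil i, ← hk]
  simp only [Matrix.sub_mulVec, Matrix.mulVec_sub]
  abel
end

section
/- Let n, m, q be positive integers with q ≤ n. Let A = [𝒜 | (I_{n−q}; 0_{q×(n−q)})] and F = [ℱ | (I_{n−q}; 0_{q×(n−q)})] with 𝒜, ℱ ∈ ℝ^{n×q}, let B ∈ ℝ^{n×m}, C = [I_q, 0_{q×(n−q)}] ∈ ℝ^{q×n}. Suppose x_{t+1} = A x_t + B u_t + d_t, y_t = C x_t, and M_{t+1} = F M_t + [I_n⊗y_tᵀ, I_n⊗u_tᵀ] with M₀ = 0. Fix 𝒜̂ ∈ ℝ^{n×q}, B̂ ∈ ℝ^{n×m}, x̂₀ ∈ ℝ^n; set Â := [𝒜̂ | (I_{n−q}; 0_{q×(n−q)})] and p̂ := (vec(𝒜̂)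 − vec(ℱ); vec(B̂)). Define the observer state x̂_t := M_t p̂ + F^t x̂₀ and the estimation error x̃_t := x_t − x̂_t. Then for all t ≥ 0: x̂_{t+1} = F x̂_t + (Â − F) x_t + B̂ u_t, and consequently x̃_{t+1} = F x̃_t + (A − Â) x_t + (B − B̂) u_t + d_t. -/
/-- Luenberger-type form of the adaptive observer with fixed point estimates:
`x̂_{t+1} = F x̂_t + (Â - F) x_t + B̂ u_t`, hence
`x̃_{t+1} = F x̃_t + (A - Â) x_t + (B - B̂) u_t + d_t`.
Matrices in observable canonical form `A = [𝒜 | (I_{n-q}; 0)]` are encoded entrywise: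
`A i j = 𝒜 i j` for `j < q` and `A i j = δ_{i, j-q}` for `j ≥ q`.  The regressor
`[I_n ⊗ yᵀ, I_n ⊗ uᵀ]` has columns indexed by `(Fin n × Fin q) ⊕ (Fin n × Fin m)`,
and `p̂ = (vec(𝒜̂) - vec(ℱ); vec(B̂))` (row-stacked vectorizations). -/
theorem stmt15 (n m q : ℕ) (hn : 0 < n) (hm : 0 < m) (hq0 : 0 < q) (hqn : q ≤ n)
    (Acal Fcal : Matrix (Fin n) (Fin q) ℝ) (B : Matrix (Fin n) (Fin m) ℝ)
    (A F : Matrix (Fin n) (Fin n) ℝ)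
    (hA : ∀ i j, A i j = if h : (j : ℕ) < q then Acal i ⟨(j : ℕ), h⟩
      else if (i : ℕ) = (j : ℕ) - q then 1 else 0)
    (hF : ∀ i j, F i j = if h : (j : ℕ) < q then Fcal i ⟨(j : ℕ), h⟩
      else if (i : ℕ) = (j : ℕ) - q then 1 else 0)
    (C : Matrix (Fin q) (Fin n) ℝ)
    (hC : ∀ i j, C i j = if (i : ℕ) = (j : ℕ) then 1 else 0)
    (u : ℕ → Fin m → ℝ) (d : ℕ → Fin n → ℝ)
    (x : ℕ → Fin n → ℝ) (y : ℕ → Fin q → ℝ)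
    (hx : ∀ t, x (t + 1) = A.mulVec (x t) + B.mulVec (u t) + d t)
    (hy : ∀ t, y t = C.mulVec (x t))
    (Reg : ℕ → Matrix (Fin n) ((Fin n × Fin q) ⊕ (Fin n × Fin m)) ℝ)
    (hReg : ∀ t i c, Reg t i c = Sum.elim
      (fun ij : Fin n × Fin q => if i = ij.1 then y t ij.2 else 0)
      (fun ij : Fin n × Fin m => if i = ij.1 then u t ij.2 else 0) c)
    (M : ℕ → Matrix (Fin n) ((Fin n × Fin q) ⊕ (Fin n × Fin m)) ℝ)
    (hM0 : M 0 = 0) (hM : ∀ t, M (t + 1) = F * M t + Reg t)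
    (Ahatcal : Matrix (Fin n) (Fin q) ℝ) (Bhat : Matrix (Fin n) (Fin m) ℝ)
    (xhat0 : Fin n → ℝ)
    (Ahat : Matrix (Fin n) (Fin n) ℝ)
    (hAhat : ∀ i j, Ahat i j = if h : (j : ℕ) < q then Ahatcal i ⟨(j : ℕ), h⟩
      else if (i : ℕ) = (j : ℕ) - q then 1 else 0)
    (phat : ((Fin n × Fin q) ⊕ (Fin n × Fin m)) → ℝ)
    (hphat : phat = Sum.elim
      (fun ij : Fin n × Fin q => Ahatcal ij.1 ij.2 - Fcal ij.1 ij.2)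
      (fun ij : Fin n × Fin m => Bhat ij.1 ij.2))
    (xhat xtil : ℕ → Fin n → ℝ)
    (hxhat : ∀ t, xhat t = (M t).mulVec phat + (F ^ t).mulVec xhat0)
    (hxtil : ∀ t, xtil t = x t - xhat t) :
    ∀ t, xhat (t + 1) = F.mulVec (xhat t) + (Ahat - F).mulVec (x t)
        + Bhat.mulVec (u t) ∧
      xtil (t + 1) = F.mulVec (xtil t) + (A - Ahat).mulVec (x t)
        + (B - Bhat).mulVec (u t) + d t := by

  have hyval : ∀ t (j : Fin q), y t j = x t (Fin.castLE hqn j) := by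
    intro t j
    rw [hy]
    simp only [Matrix.mulVec, dotProduct, hC]
    rw [Finset.sum_eq_single (Fin.castLE hqn j)]
    · simp
    · intro k _ hk
      rw [if_neg, zero_mul]
      intro h
      exact hk (by apply Fin.ext; simpa using h.symm)
    · simp
  have hdiff : ∀ i (j : Fin n), Ahat i j - F i j =
      if h : (j : ℕ) < q then Ahatcal i ⟨(j : ℕ), h⟩ - Fcal i ⟨(j : ℕ), h⟩ else 0 := by
    intro i j
    rw [hAhat, hF]
    split <;> simp
  have hreg : ∀ t, (Reg t).mulVec phat
      = (Ahat - F).mulVec (x t) + Bhat.mulVec (u t) := by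
    intro t
    funext i
    simp only [Matrix.mulVec, dotProduct, Pi.add_apply, Matrix.sub_apply, hReg, hphat]
    rw [Fintype.sum_sum_type]
    simp only [Sum.elim_inl, Sum.elim_inr]
    rw [Fintype.sum_prod_type, Fintype.sum_prod_type]
    simp only [ite_mul, zero_mul, Finset.sum_ite_irrel, Finset.sum_const_zero,
      Finset.sum_ite_eq, Finset.mem_univ, if_true]
    have h2 : ∑ j : Fin m, u t j * Bhat i j = ∑ j : Fin m, Bhat i j * u t j := by
      simp [mul_comm]
    rw [h2]
    congr 1
    have hsub : (Finset.univ : Finset (Fin q)).map (Fin.castLEEmb hqn)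
        ⊆ (Finset.univ : Finset (Fin n)) := Finset.subset_univ _
    rw [show ∑ j : Fin n, (Ahat i j - F i j) * x t j
        = ∑ j ∈ (Finset.univ : Finset (Fin q)).map (Fin.castLEEmb hqn),
          (Ahat i j - F i j) * x t j from ?_]
    · rw [Finset.sum_map]
      apply Finset.sum_congr rfl
      intro j _
      rw [hdiff]
      have hj : ((Fin.castLEEmb hqn j : Fin n) : ℕ) < q := by simp
      rw [dif_pos hj, hyval]
      have he : (⟨((Fin.castLEEmb hqn j : Fin n) : ℕ), hj⟩ : Fin q) = j := by
        apply Fin.ext; simp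
      rw [he]
      have he2 : (Fin.castLEEmb hqn j : Fin n) = Fin.castLE hqn j := rfl
      rw [he2, mul_comm]
    · symm
      apply Finset.sum_subset hsub
      intro j _ hj
      have hjq : ¬ ((j : ℕ) < q) := by
        intro h
        exact hj (Finset.mem_map.mpr ⟨⟨(j : ℕ), h⟩, Finset.mem_univ _, by apply Fin.ext; simp⟩)
      rw [hdiff, dif_neg hjq, zero_mul]
  intro t
  have h1 : xhat (t + 1) = F.mulVec (xhat t) + (Ahat - F).mulVec (x t)
      + Bhat.mulVec (u t) := by
    rw [hxhat (t + 1), hM t, hxhat t, pow_succ', Matrix.add_mulVec,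
      ← Matrix.mulVec_mulVec, ← Matrix.mulVec_mulVec, Matrix.mulVec_add, hreg]
    abel
  refine ⟨h1, ?_⟩
  rw [hxtil (t + 1), hxtil t, hx t, h1, Matrix.mulVec_sub, Matrix.sub_mulVec,
    Matrix.sub_mulVec, Matrix.sub_mulVec]
  abel
end
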